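/- arXiv:1605.00174 — 8 statements merged into one kernel-verified Lean document; each statement's English description precedes it below -/
import Mathlib

section
/- Every subspace of K⟨G⟩, where (G,<) is a well-ordered set, admits a unique reduced basis. -/
/-- `g` is the leading generator of `v`: it lies in the support of `v` and
dominates every element of the support. -/
def IsLeadingGen {K G : Type*} [Field K] [LinearOrder G]
    (v : G →₀ K) (g : G) : Prop :=
  g ∈ v.support ∧ ∀ g' ∈ v.support, g' ≤ g

/-- `B` is a reduced basis of the subspace `V` of `K⟨G⟩`: a basis of `V` whose
elements have leading coefficient `1` and such that the leading generator of an
element does not occur in the support of any other element. -/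
def IsReducedBasis {K G : Type*} [Field K] [LinearOrder G]
    (V : Submodule K (G →₀ K)) (B : Set (G →₀ K)) : Prop :=
  (B ⊆ (V : Set (G →₀ K))) ∧
  LinearIndependent K (fun e : B => (e : G →₀ K)) ∧
  Submodule.span K B = V ∧
  (∀ e ∈ B, ∃ g : G, IsLeadingGen e g ∧ e g = 1) ∧
  (∀ e ∈ B, ∀ e' ∈ B, e ≠ e' → ∀ g : G, IsLeadingGen e' g → e g = 0)

/-!
Let `L` be the set of leading generators of the nonzero vectors of `V`. A vector of `V` vanishing
on `L` is zero, since its own leading generator lies in `L`; so restriction to `L` is injective on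
`V`, and by well-founded induction on `g ∈ L` its image contains every `single g 1`. The
preimages of these form a reduced basis. Conversely, in a reduced set `B` the coefficient of
`e ∈ B` in a linear combination is the value of the combination at the leading generator of `e`,
so the leading generator of a combination is that of one of its terms. Hence if `B` spans `V`,
every `g ∈ L` leads some `e ∈ B`, and this `e` is pinned down by its values on `L`: `1` at `g`,
`0` elsewhere.
-/

open Submodule Finsupp

section ReducedBasis

variable {K G : Type*} [Field K] [LinearOrder G]

section LeadingGen

variable {v : G →₀ K} {g g' : G}

theorem IsLeadingGen.unique (h : IsLeadingGen v g) (h' : IsLeadingGen v g') : g = g' :=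
  le_antisymm (h'.2 g h.1) (h.2 g' h'.1)

theorem IsLeadingGen.apply_ne_zero (h : IsLeadingGen v g) : v g ≠ 0 :=
  mem_support_iff.1 h.1

theorem IsLeadingGen.apply_eq_zero_of_lt (h : IsLeadingGen v g) (hlt : g < g') : v g' = 0 :=
  notMem_support_iff.1 fun hg' => (h.2 g' hg').not_gt hlt

theorem exists_isLeadingGen (hv : v ≠ 0) : ∃ g, IsLeadingGen v g := by
  have hne : v.support.Nonempty := support_nonempty_iff.2 hv
  exact ⟨v.support.max' hne, v.support.max'_mem hne, fun g' hg' => v.support.le_max' g' hg'⟩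

end LeadingGen

def leadingGens (V : Submodule K (G →₀ K)) : Set G :=
  {g | ∃ v ∈ V, IsLeadingGen v g}

section Subspace

variable {V : Submodule K (G →₀ K)}

theorem eq_of_forall_leadingGens_apply_eq {v w : G →₀ K} (hv : v ∈ V) (hw : w ∈ V)
    (h : ∀ g ∈ leadingGens V, v g = w g) : v = w := by
  by_contra hne
  obtain ⟨g, hg⟩ := exists_isLeadingGen (sub_ne_zero.2 hne)
  exact hg.apply_ne_zero (by simp [h g ⟨_, sub_mem hv hw, hg⟩])

theorem span_eq_of_forall_leadingGens_exists [WellFoundedLT G] {B : Set (G →₀ K)}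
    (hBV : B ⊆ V) (hB : ∀ g ∈ leadingGens V, ∃ e ∈ B, IsLeadingGen e g) :
    span K B = V := by
  refine le_antisymm (span_le.2 hBV) fun v hv => ?_
  rcases eq_or_ne v 0 with rfl | hv0
  · exact zero_mem _
  obtain ⟨g, hg⟩ := exists_isLeadingGen hv0
  induction g using WellFoundedLT.induction generalizing v with
  | _ g ih =>
  obtain ⟨e, heB, he⟩ := hB g ⟨v, hv, hg⟩
  set c := v g / e g
  -- subtracting `c • e` cancels the leading term of `v`
  suffices v - c • e ∈ span K B by
    simpa using add_mem this (smul_mem _ c (subset_span heB))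
  rcases eq_or_ne (v - c • e) 0 with h0 | h0
  · rw [h0]; exact zero_mem _
  obtain ⟨g', hg'⟩ := exists_isLeadingGen h0
  have hle : g' ≤ g := by
    by_contra! hlt
    exact hg'.apply_ne_zero (by simp [hg.apply_eq_zero_of_lt hlt, he.apply_eq_zero_of_lt hlt])
  have hne : g' ≠ g := by
    rintro rfl
    exact hg'.apply_ne_zero (by simp [c, div_mul_cancel₀ _ he.apply_ne_zero])
  exact ih g' (lt_of_le_of_ne hle hne) _ (sub_mem hv (smul_mem _ _ (hBV heB))) h0 hg'

end Subspace

def IsReducedSet (B : Set (G →₀ K)) : Prop :=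
  (∀ e ∈ B, ∃ g, IsLeadingGen e g ∧ e g = 1) ∧
  ∀ e ∈ B, ∀ e' ∈ B, e ≠ e' → ∀ g, IsLeadingGen e' g → e g = 0

namespace IsReducedSet

variable {B : Set (G →₀ K)} (hB : IsReducedSet B)
include hB

theorem apply_eq_one {e : G →₀ K} (he : e ∈ B) {g : G} (hg : IsLeadingGen e g) : e g = 1 := by
  obtain ⟨g', hg', h1⟩ := hB.1 e he
  rwa [hg.unique hg']

theorem linearCombination_apply_of_isLeadingGen (l : B →₀ K) {e : B} {g : G}
    (hg : IsLeadingGen (e : G →₀ K) g) :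
    linearCombination K ((↑) : B → G →₀ K) l g = l e := by
  rw [Finsupp.linearCombination_apply, Finsupp.sum_apply, Finsupp.sum, Finset.sum_eq_single e]
  · simp [hB.apply_eq_one e.2 hg]
  · intro e' _ hne
    simp [hB.2 _ e'.2 _ e.2 (Subtype.coe_injective.ne hne) g hg]
  · intro he
    simp [notMem_support_iff.1 he]

theorem linearIndependent : LinearIndependent K (fun e : B => (e : G →₀ K)) := by
  refine linearIndependent_iff.2 fun l hl => Finsupp.ext fun e => ?_
  obtain ⟨g, hg, -⟩ := hB.1 e e.2
  rw [← hB.linearCombination_apply_of_isLeadingGen l hg, hl, Finsupp.zero_apply,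
    Finsupp.zero_apply]

theorem exists_isLeadingGen_of_mem_span {v : G →₀ K} (hv : v ∈ span K B) {g : G}
    (hg : IsLeadingGen v g) : ∃ e ∈ B, IsLeadingGen e g := by
  obtain ⟨l, rfl⟩ := (mem_span_iff_linearCombination K B v).1 hv
  choose lg hlg _ using fun e : B => hB.1 e e.2
  have hl : l.support.Nonempty := by
    rw [support_nonempty_iff]
    rintro rfl
    simpa using hg.apply_ne_zero
  -- the largest leading generator occurring in the combination is the leading generator of `v`
  obtain ⟨e, he, hmax⟩ := l.support.exists_max_image lg hl
  refine ⟨e, e.2, hg.unique ⟨?_, fun h hh => ?_⟩ ▸ hlg e⟩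
  · rw [mem_support_iff, hB.linearCombination_apply_of_isLeadingGen l (hlg e)]
    exact mem_support_iff.1 he
  · by_contra! hlt
    refine mem_support_iff.1 hh ?_
    rw [Finsupp.linearCombination_apply, Finsupp.sum_apply, Finsupp.sum]
    refine Finset.sum_eq_zero fun e' he' => ?_
    simp [(hlg e').apply_eq_zero_of_lt ((hmax e' he').trans_lt hlt)]

theorem apply_eq_ite_of_mem_leadingGens {e : G →₀ K} (he : e ∈ B) {g : G}
    (hg : IsLeadingGen e g) {h : G} (hh : h ∈ leadingGens (span K B)) :
    e h = if h = g then 1 else 0 := by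
  obtain ⟨v, hv, hvh⟩ := hh
  obtain ⟨e', he', he'h⟩ := hB.exists_isLeadingGen_of_mem_span hv hvh
  split_ifs with hhg
  · exact hhg ▸ hB.apply_eq_one he hg
  · exact hB.2 e he e' he' (by rintro rfl; exact hhg (he'h.unique hg)) h he'h

theorem subset_of_span_eq {B' : Set (G →₀ K)} (hB' : IsReducedSet B')
    (hspan : span K B = span K B') : B ⊆ B' := by
  intro e he
  obtain ⟨g, hg, -⟩ := hB.1 e he
  have heV : e ∈ span K B' := hspan ▸ subset_span he
  obtain ⟨e', he', he'g⟩ := hB'.exists_isLeadingGen_of_mem_span heV hg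
  convert he'
  refine eq_of_forall_leadingGens_apply_eq heV (subset_span he') fun h hh => ?_
  rw [hB'.apply_eq_ite_of_mem_leadingGens he' he'g hh,
    hB.apply_eq_ite_of_mem_leadingGens he hg (hspan ▸ hh)]

end IsReducedSet

theorem isReducedBasis_iff {V : Submodule K (G →₀ K)} {B : Set (G →₀ K)} :
    IsReducedBasis V B ↔ span K B = V ∧ IsReducedSet B :=
  ⟨fun h => ⟨h.2.2.1, h.2.2.2⟩, fun ⟨hspan, hB⟩ =>
    ⟨hspan ▸ subset_span, hB.linearIndependent, hspan, hB⟩⟩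

section Existence

variable (V : Submodule K (G →₀ K))

theorem single_mem_map_lsubtypeDomain_leadingGens [WellFoundedLT G] (g : leadingGens V) :
    single g 1 ∈ V.map (lsubtypeDomain (R := K) (leadingGens V)) := by
  induction g using WellFoundedLT.induction with
  | _ g ih =>
  obtain ⟨w, hwV, hw⟩ := g.2
  set r : leadingGens V →₀ K := w.subtypeDomain (· ∈ leadingGens V) - single g (w g)
  have hr : r ∈ supported K K (Set.Iio g) := by
    intro h hh
    have hrh : r h ≠ 0 := mem_support_iff.1 hh
    have hne : h ≠ g := by rintro rfl; simp [r] at hrh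
    have hwh : w h ≠ 0 := by simpa [r, single_eq_of_ne hne] using hrh
    exact lt_of_le_of_ne (hw.2 h (mem_support_iff.2 hwh)) (Subtype.coe_injective.ne hne)
  have hbelow : supported K K (Set.Iio g) ≤ V.map (lsubtypeDomain (leadingGens V)) := by
    rw [supported_eq_span_single, span_le]
    rintro _ ⟨h, hh, rfl⟩
    exact ih h hh
  have hsingle : single g (w g) ∈ V.map (lsubtypeDomain (R := K) (leadingGens V)) := by
    have := sub_mem (mem_map_of_mem hwV) (hbelow hr)
    rwa [lsubtypeDomain_apply, sub_sub_cancel] at this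
  simpa [smul_single, inv_mul_cancel₀ hw.apply_ne_zero] using smul_mem _ (w g)⁻¹ hsingle

def reducedBasis : Set (G →₀ K) :=
  {e ∈ V | ∃ g : leadingGens V, e.subtypeDomain (· ∈ leadingGens V) = single g 1}

variable {V} in
theorem isLeadingGen_of_subtypeDomain_eq_single {v : G →₀ K} (hv : v ∈ V) {g : leadingGens V}
    (h : v.subtypeDomain (· ∈ leadingGens V) = single g 1) : IsLeadingGen v g ∧ v g = 1 := by
  have hg1 : v g = 1 := by simpa using DFunLike.congr_fun h g
  obtain ⟨g', hg'⟩ := exists_isLeadingGen (v := v) (by rintro rfl; simp at hg1)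
  have hg'g : (⟨g', v, hv, hg'⟩ : leadingGens V) = g := by
    by_contra hne
    exact hg'.apply_ne_zero
      (by simpa [single_eq_of_ne hne] using DFunLike.congr_fun h ⟨g', v, hv, hg'⟩)
  exact ⟨congrArg Subtype.val hg'g ▸ hg', hg1⟩

theorem isReducedSet_reducedBasis : IsReducedSet (reducedBasis V) := by
  refine ⟨fun e ⟨heV, g, hg⟩ => ⟨g, isLeadingGen_of_subtypeDomain_eq_single heV hg⟩, ?_⟩
  rintro e ⟨heV, g, hg⟩ e' ⟨he'V, g', hg'⟩ hne h hh
  obtain rfl := hh.unique (isLeadingGen_of_subtypeDomain_eq_single he'V hg').1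
  have hgg' : g' ≠ g := by
    rintro rfl
    exact hne (eq_of_forall_leadingGens_apply_eq heV he'V fun k hk => by
      simpa using DFunLike.congr_fun (hg.trans hg'.symm) ⟨k, hk⟩)
  simpa [single_eq_of_ne hgg'] using DFunLike.congr_fun hg g'

theorem span_reducedBasis [WellFoundedLT G] : span K (reducedBasis V) = V := by
  refine span_eq_of_forall_leadingGens_exists (fun e he => he.1) fun g hg => ?_
  obtain ⟨e, heV, he⟩ := single_mem_map_lsubtypeDomain_leadingGens V ⟨g, hg⟩
  exact ⟨e, ⟨heV, _, he⟩, (isLeadingGen_of_subtypeDomain_eq_single heV he).1⟩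

end Existence

end ReducedBasis

/-- Every subspace of `K⟨G⟩`, for `(G,<)` a well-ordered set, admits a unique
reduced basis. -/
theorem exists_unique_reducedBasis {K G : Type*} [Field K] [LinearOrder G]
    [WellFoundedLT G] (V : Submodule K (G →₀ K)) :
    ∃! B : Set (G →₀ K), IsReducedBasis V B := by
  have hspan := span_reducedBasis V
  have hred := isReducedSet_reducedBasis V
  refine ⟨reducedBasis V, isReducedBasis_iff.2 ⟨hspan, hred⟩, fun B hB => ?_⟩
  obtain ⟨hBspan, hB⟩ := isReducedBasis_iff.1 hB
  exact (hB.subset_of_span_eq hred (hBspan.trans hspan.symm)).antisymm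
    (hred.subset_of_span_eq hB (hspan.trans hBspan.symm))
end

section
/- For reduction operators T₁ and T₂ relative to a well-ordered set (G,<), T₁ ≼ T₂ (i.e., ker(T₂) ⊆ ker(T₁)) if and only if T₁ ∘ T₂ = T₁. -/
/-- `T` is a reduction operator relative to `(G,<)`. -/
def IsRedOp {K G : Type*} [Field K] [LinearOrder G]
    (T : Module.End K (G →₀ K)) : Prop :=
  T ∘ₗ T = T ∧ ∀ g : G, T (Finsupp.single g 1) = Finsupp.single g 1 ∨
    ∀ g' ∈ (T (Finsupp.single g 1)).support, g' < g

-- `T₂` is idempotent, so `ker T₂ = range (1 - T₂)`, and `T₁` kills that range iff `T₁ ∘ T₂ = T₁`.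
theorem redOp_le_iff_comp_eq_general {K G : Type*} [Field K] [LinearOrder G]
    (T₁ T₂ : Module.End K (G →₀ K))
    (h₂ : IsRedOp T₂) :
    LinearMap.ker T₂ ≤ LinearMap.ker T₁ ↔ T₁ ∘ₗ T₂ = T₁ :=
  (LinearMap.IsIdempotentElem.comp_eq_left_iff h₂.1 T₁).symm

/-- For reduction operators, `ker T₂ ⊆ ker T₁` iff `T₁ ∘ T₂ = T₁`. -/
theorem redOp_le_iff_comp_eq {K G : Type*} [Field K] [LinearOrder G]
    [WellFoundedLT G] (T₁ T₂ : Module.End K (G →₀ K))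
    (h₁ : IsRedOp T₁) (h₂ : IsRedOp T₂) :
    LinearMap.ker T₂ ≤ LinearMap.ker T₁ ↔ T₁ ∘ₗ T₂ = T₁ :=
  redOp_le_iff_comp_eq_general T₁ T₂ h₂
end

section
/- A subset F of reduction operators relative to a well-ordered set (G,<) is confluent if and only if it has the Church-Rosser property. -/
/-!
Rewriting with the operators of `F` never changes the value of `∧F`, since `v - T v ∈ ker T ⊆ ker ∧F`
for idempotent `T ∈ F`. Conversely every `v` can be rewritten into a vector supported on
`Red(F)`: apply some `T ∈ F` that does not fix the largest basis vector of the support of `v`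
outside `Red(F)`; by triangularity this strictly lowers that largest basis vector, so the process
stops since `<` is well founded. If `Red(F) ⊆ Red(∧F)`, the final vector is fixed by `∧F`, hence
equals `(∧F)(v)`. If `F` is Church-Rosser and `g ∈ Red(F)`, every element of `⟨F⟩` fixes `g`, so
`(∧F)(g) = g`.
-/

open Finsupp Submodule

section Monoid

variable {R M : Type*} [Ring R] [AddCommGroup M] [Module R M]

lemma Module.End.mul_eq_of_isIdempotentElem_of_ker_le {T W : Module.End R M}
    (hT : IsIdempotentElem T) (hker : LinearMap.ker T ≤ LinearMap.ker W) : W * T = W := by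
  ext v
  have hv : v - T v ∈ LinearMap.ker T := by
    rw [LinearMap.mem_ker, map_sub, ← Module.End.mul_apply, hT.eq, sub_self]
  have := hker hv
  rwa [LinearMap.mem_ker, map_sub, sub_eq_zero, eq_comm] at this

lemma Module.End.mul_eq_of_mem_closure {S : Set (Module.End R M)} {W P : Module.End R M}
    (hS : ∀ T ∈ S, IsIdempotentElem T ∧ LinearMap.ker T ≤ LinearMap.ker W)
    (hP : P ∈ Submonoid.closure S) : W * P = W := by
  induction hP using Submonoid.closure_induction with
  | mem T hT => exact mul_eq_of_isIdempotentElem_of_ker_le (hS T hT).1 (hS T hT).2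
  | one => exact mul_one W
  | mul P Q _ _ hP hQ => rw [← mul_assoc, hP, hQ]

lemma Module.End.apply_eq_self_of_mem_closure {S : Set (Module.End R M)} {x : M}
    (hS : ∀ T ∈ S, T x = x) {P : Module.End R M} (hP : P ∈ Submonoid.closure S) : P x = x :=
  Submonoid.closure_le (S := MulAction.stabilizerSubmonoid _ x) |>.2 hS hP

end Monoid

section Finsupp

variable {K G H : Type*} [Semiring K]

lemma Module.End.apply_eq_self_of_forall_mem_support (T : Module.End K (G →₀ K)) {v : G →₀ K}
    (h : ∀ g ∈ v.support, T (Finsupp.single g 1) = Finsupp.single g 1) : T v = v := by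
  have hv : v ∈ span K ((fun g => single g 1) '' v.support) := by
    rw [← supported_eq_span_single, mem_supported]
  refine LinearMap.eqOn_span' (f := T) (g := LinearMap.id) ?_ hv
  rintro _ ⟨g, hg, rfl⟩
  exact h g hg

lemma LinearMap.support_apply_subset [DecidableEq H] (T : (G →₀ K) →ₗ[K] (H →₀ K))
    (v : G →₀ K) : (T v).support ⊆ v.support.biUnion fun g => (T (Finsupp.single g 1)).support :=
  calc (T v).support = (v.sum fun g c => T (Finsupp.single g c)).support := by
        rw [← map_finsuppSum, sum_single]
    _ ⊆ v.support.biUnion fun g => (T (Finsupp.single g (v g))).support := support_sum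
    _ ⊆ _ := Finset.biUnion_mono fun g _ => by
        rw [← smul_single_one, map_smul]
        exact support_smul

lemma apply_single_eq_of_mem_support [Nontrivial K] {T : Module.End K (G →₀ K)} {g x : G}
    (hT : T (single g 1) = single g 1) (hx : x ∈ (T (single g 1)).support) : x = g := by
  rwa [hT, support_single g one_ne_zero, Finset.mem_singleton] at hx

def IsReducedBy (F : Set (Module.End K (G →₀ K))) (g : G) : Prop :=
  ∀ T ∈ F, T (single g 1) = single g 1

open Classical in
noncomputable def irreducibleSupport (F : Set (Module.End K (G →₀ K))) (v : G →₀ K) :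
    Finset G :=
  {g ∈ v.support | ¬ IsReducedBy F g}

lemma mem_irreducibleSupport {F : Set (Module.End K (G →₀ K))} {v : G →₀ K} {g : G} :
    g ∈ irreducibleSupport F v ↔ g ∈ v.support ∧ ¬ IsReducedBy F g := by
  classical
  simp only [irreducibleSupport, Finset.mem_filter]

end Finsupp

section Reduction

variable {K G : Type*} [Field K] [LinearOrder G]

lemma IsRedOp.irreducibleSupport_apply_lt {F : Set (Module.End K (G →₀ K))}
    {T : Module.End K (G →₀ K)} (hT : IsRedOp T) (hTF : T ∈ F) {v : G →₀ K} {g : G}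
    (hg : ∀ h ∈ irreducibleSupport F v, h ≤ g) (hTg : T (single g 1) ≠ single g 1) :
    ∀ x ∈ irreducibleSupport F (T v), x < g := by
  classical
  intro x hx
  obtain ⟨hxT, hx_irr⟩ := mem_irreducibleSupport.1 hx
  obtain ⟨h, hh, hxh⟩ := Finset.mem_biUnion.1 (LinearMap.support_apply_subset T v hxT)
  by_cases hh_red : IsReducedBy F h
  · exact absurd (apply_single_eq_of_mem_support (hh_red T hTF) hxh ▸ hh_red) hx_irr
  have hhg : h ≤ g := hg h (mem_irreducibleSupport.2 ⟨hh, hh_red⟩)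
  rcases hT.2 h with hTh | hT_lt
  · obtain rfl := apply_single_eq_of_mem_support hTh hxh
    exact hhg.lt_of_ne fun hxg => hTg (hxg ▸ hTh)
  · exact (hT_lt x hxh).trans_le hhg

lemma exists_max_irreducibleSupport_apply_lt {F : Set (Module.End K (G →₀ K))}
    (hF : ∀ T ∈ F, IsRedOp T) {v : G →₀ K} (hne : (irreducibleSupport F v).Nonempty) :
    ∃ T ∈ F, (irreducibleSupport F (T v)).max < (irreducibleSupport F v).max := by
  obtain ⟨-, hg_irr⟩ := mem_irreducibleSupport.1 (Finset.max'_mem _ hne)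
  simp only [IsReducedBy, not_forall] at hg_irr
  obtain ⟨T, hTF, hTg⟩ := hg_irr
  refine ⟨T, hTF, ?_⟩
  rw [← Finset.coe_max' hne, Finset.max_eq_sup_coe, Finset.sup_lt_iff (WithBot.bot_lt_coe _)]
  exact fun x hx => WithBot.coe_lt_coe.2 <| (hF T hTF).irreducibleSupport_apply_lt hTF
    (fun h hh => Finset.le_max' _ h hh) hTg x hx

lemma exists_mem_closure_forall_mem_support_isReducedBy [WellFoundedLT G]
    {F : Set (Module.End K (G →₀ K))} (hF : ∀ T ∈ F, IsRedOp T) (v : G →₀ K) :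
    ∃ P ∈ Submonoid.closure F, ∀ g ∈ (P v).support, IsReducedBy F g := by
  induction hm : (irreducibleSupport F v).max using WellFoundedLT.induction generalizing v with
  | _ m ih =>
  rcases (irreducibleSupport F v).eq_empty_or_nonempty with hempty | hne
  · refine ⟨1, Submonoid.one_mem _, fun g hg => ?_⟩
    by_contra hg_irr
    simpa [hempty] using mem_irreducibleSupport.2 ⟨hg, hg_irr⟩
  · obtain ⟨T, hTF, hlt⟩ := exists_max_irreducibleSupport_apply_lt hF hne
    obtain ⟨P, hP, hred⟩ := ih _ (hm ▸ hlt) (T v) rfl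
    exact ⟨P * T, Submonoid.mul_mem _ hP (Submonoid.subset_closure hTF), hred⟩

end Reduction

theorem confluent_iff_churchRosser_general {K G : Type*} [Field K] [LinearOrder G]
    [WellFoundedLT G] (F : Set (Module.End K (G →₀ K)))
    (hF : ∀ T ∈ F, IsRedOp T) (W : Module.End K (G →₀ K))
    (hker : LinearMap.ker W = ⨆ T ∈ F, LinearMap.ker T) :
    ({g : G | ∀ T ∈ F, T (Finsupp.single g 1) = Finsupp.single g 1} ⊆
        {g : G | W (Finsupp.single g 1) = Finsupp.single g 1}) ↔
      (∀ v : G →₀ K, ∃ R ∈ Submonoid.closure F, R v = W v) := by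
  constructor
  · intro hsub v
    obtain ⟨R, hR, hred⟩ := exists_mem_closure_forall_mem_support_isReducedBy hF v
    have hWR : W * R = W := Module.End.mul_eq_of_mem_closure
      (fun T hT => ⟨(hF T hT).1, hker ▸ le_iSup₂ (f := fun T _ => LinearMap.ker T) T hT⟩) hR
    refine ⟨R, hR, ?_⟩
    calc R v = W (R v) :=
          (W.apply_eq_self_of_forall_mem_support fun g hg => hsub (hred g hg)).symm
      _ = W v := by rw [← Module.End.mul_apply, hWR]
  · intro hCR g hg
    obtain ⟨R, hR, hRg⟩ := hCR (Finsupp.single g 1)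
    show W (Finsupp.single g 1) = Finsupp.single g 1
    rw [← hRg, Module.End.apply_eq_self_of_mem_closure hg hR]

/-- A set of reduction operators is confluent iff it has the Church-Rosser
property. Here `W` is the lower bound `∧F`, i.e. the reduction operator whose
kernel is the sum of the kernels of the elements of `F`. -/
theorem confluent_iff_churchRosser {K G : Type*} [Field K] [LinearOrder G]
    [WellFoundedLT G] (F : Set (Module.End K (G →₀ K)))
    (hF : ∀ T ∈ F, IsRedOp T) (W : Module.End K (G →₀ K)) (hW : IsRedOp W)
    (hker : LinearMap.ker W = ⨆ T ∈ F, LinearMap.ker T) :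
    ({g : G | ∀ T ∈ F, T (Finsupp.single g 1) = Finsupp.single g 1} ⊆
        {g : G | W (Finsupp.single g 1) = Finsupp.single g 1}) ↔
      (∀ v : G →₀ K, ∃ R ∈ Submonoid.closure F, R v = W v) :=
  confluent_iff_churchRosser_general F hF W hker
end

section
/- Every element of K⟨G⟩ admits an F-normal form: for every v ∈ K⟨G⟩ there exists R in the monoid generated by F under composition such that R(v) lies in the span of Red(F). -/
open Finsupp Set

theorem Finsupp.support_apply_subset {R α β : Type*} [Semiring R]
    (T : (α →₀ R) →ₗ[R] (β →₀ R)) {w : α →₀ R} {s : Set β}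
    (h : ∀ a ∈ w.support, ↑(T (single a 1)).support ⊆ s) : ↑(T w).support ⊆ s := by
  classical
  have hw : T w = ∑ a ∈ w.support, w a • T (single a 1) := by
    conv_lhs => rw [← w.sum_single]
    simp only [Finsupp.sum, map_sum, ← map_smul, smul_single_one]
  rw [hw]
  refine (Finset.coe_subset.mpr support_finsetSum).trans ?_
  simp only [Finset.coe_biUnion, iUnion_subset_iff]
  exact fun a ha => (Finset.coe_subset.mpr support_smul).trans (h a ha)

namespace IsRedOp

variable {K G : Type*} [Field K] [LinearOrder G] {T : Module.End K (G →₀ K)}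

theorem support_apply_single_subset (hT : IsRedOp T) (g : G) :
    ↑(T (single g 1)).support ⊆ Iic g := by
  rcases hT.2 g with hfix | hlow
  · rw [hfix]
    exact (Finset.coe_subset.mpr support_single_subset).trans (by simp)
  · exact fun a ha => le_of_lt (hlow a ha)

theorem support_apply_subset_Iio (hT : IsRedOp T) {g : G} (hg : T (single g 1) ≠ single g 1)
    {w : G →₀ K} (hw : ↑w.support ⊆ Iic g) : ↑(T w).support ⊆ Iio g := by
  refine Finsupp.support_apply_subset T fun a ha => ?_
  rcases (hw ha).lt_or_eq with hag | rfl
  · exact (hT.support_apply_single_subset a).trans (Iic_subset_Iio.mpr hag)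
  · exact (hT.2 a).resolve_left hg

end IsRedOp

section NormalForms

variable {K G : Type*} [Field K] (F : Set (Module.End K (G →₀ K)))

/-- `Red(F)`. -/
def reducedGenerators : Set G :=
  {g | ∀ T ∈ F, T (single g 1) = single g 1}

/-- The space `K⟨Red(F)⟩` of `F`-normal forms. -/
noncomputable def normalForms : Submodule K (G →₀ K) :=
  Submodule.span K ((fun g => single g (1 : K)) '' reducedGenerators F)

def HasNormalForm (w : G →₀ K) : Prop :=
  ∃ R ∈ Submonoid.closure F, R w ∈ normalForms F

variable {F}

theorem apply_eq_self_of_mem_normalForms {s : G →₀ K} (hs : s ∈ normalForms F)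
    {R : Module.End K (G →₀ K)} (hR : R ∈ Submonoid.closure F) : R s = s := by
  have hspan (T) (hT : T ∈ F) : normalForms F ≤ LinearMap.eqLocus T LinearMap.id := by
    rw [normalForms, Submodule.span_le]
    rintro _ ⟨g, hg, rfl⟩
    exact hg T hT
  have hfix : Submonoid.closure F ≤ MulAction.stabilizerSubmonoid _ s :=
    Submonoid.closure_le.mpr fun T hT => hspan T hT hs
  exact hfix hR

theorem hasNormalForm_of_mem {w : G →₀ K} (hw : w ∈ normalForms F) : HasNormalForm F w :=
  ⟨1, one_mem _, hw⟩

theorem HasNormalForm.of_apply {T : Module.End K (G →₀ K)} (hT : T ∈ F) {w : G →₀ K}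
    (h : HasNormalForm F (T w)) : HasNormalForm F w := by
  obtain ⟨R, hR, hRw⟩ := h
  exact ⟨R * T, mul_mem hR (Submonoid.subset_closure hT), hRw⟩

theorem HasNormalForm.add_mem_normalForms {w s : G →₀ K} (h : HasNormalForm F w)
    (hs : s ∈ normalForms F) : HasNormalForm F (w + s) := by
  obtain ⟨R, hR, hRw⟩ := h
  refine ⟨R, hR, ?_⟩
  rw [map_add, apply_eq_self_of_mem_normalForms hs hR]
  exact add_mem hRw hs

variable [LinearOrder G]

theorem hasNormalForm_of_support_subset_Iic (hF : ∀ T ∈ F, IsRedOp T) {g : G}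
    (ih : ∀ w : G →₀ K, ↑w.support ⊆ Iio g → HasNormalForm F w)
    {w : G →₀ K} (hw : ↑w.support ⊆ Iic g) : HasNormalForm F w := by
  classical
  by_cases hg : g ∈ reducedGenerators F
  · have hlow : ↑(w.erase g).support ⊆ Iio g := by
      intro a ha
      rw [support_erase, Finset.coe_erase] at ha
      exact (hw ha.1).lt_of_ne ha.2
    have htop : single g (w g) ∈ normalForms F := by
      rw [← smul_single_one]
      exact Submodule.smul_mem _ _ (Submodule.subset_span ⟨g, hg, rfl⟩)
    rw [← erase_add_single g w]
    exact (ih _ hlow).add_mem_normalForms htop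
  · obtain ⟨T, hT, hTg⟩ : ∃ T ∈ F, T (single g 1) ≠ single g 1 := by
      simpa [reducedGenerators] using hg
    exact (ih _ ((hF T hT).support_apply_subset_Iio hTg hw)).of_apply hT

variable [WellFoundedLT G]

/-- The bound lives in `WithTop G` so that `⊤` covers every vector. -/
theorem hasNormalForm_of_support_lt (hF : ∀ T ∈ F, IsRedOp T) (b : WithTop G) :
    ∀ w : G →₀ K, (∀ a ∈ w.support, (a : WithTop G) < b) → HasNormalForm F w := by
  induction b using WellFoundedLT.induction with
  | ind b ih =>
  intro w hw
  obtain rfl | hne := w.support.eq_empty_or_nonempty.imp_left support_eq_empty.mp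
  · exact hasNormalForm_of_mem (zero_mem _)
  obtain ⟨m, hm, hmax⟩ := w.support.exists_max_image id hne
  refine hasNormalForm_of_support_subset_Iic hF (fun u hu => ?_) hmax
  exact ih m (hw m hm) u fun a ha => WithTop.coe_lt_coe.mpr (hu ha)

end NormalForms

/-- Every element of `K⟨G⟩` admits an `F`-normal form: it rewrites, via some
element of the monoid generated by `F`, into the span of `Red(F)`. -/
theorem exists_normal_form {K G : Type*} [Field K] [LinearOrder G]
    [WellFoundedLT G] (F : Set (Module.End K (G →₀ K)))
    (hF : ∀ T ∈ F, IsRedOp T) (v : G →₀ K) :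
    ∃ R ∈ Submonoid.closure F,
      R v ∈ Submodule.span K
        ((fun g => Finsupp.single g (1 : K)) ''
          {g : G | ∀ T ∈ F, T (Finsupp.single g 1) = Finsupp.single g 1}) :=
  hasNormalForm_of_support_lt hF ⊤ v fun _ _ => WithTop.coe_lt_top _
end

section
/- For every v ∈ K⟨G⟩, (∧F)(v) is the smallest element, for the multiset order induced by <, of the set [v] of elements v' with v' − v ∈ ker(∧F). -/
/-- The multiset order on `K⟨G⟩` induced by `<` via supports. -/
def MulLE {K G : Type*} [Field K] [LinearOrder G] (v v' : G →₀ K) : Prop :=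
  ∀ g ∈ v.support, g ∉ v'.support →
    ∃ g' ∈ v'.support, g' ∉ v.support ∧ g < g'

/-!
Write `Red(T)` for the generators fixed by `T`; every other generator is sent to a combination of
strictly smaller ones. Evaluating `T u` at a generator `m` above which `u` only meets `Red(T)`
therefore only sees the coefficient of `m`: `(T u) m = u m` if `m ∈ Red(T)` and `0` otherwise.
At the top of the support this shows that a nonzero element of `ker T` has a non-reduced leading
generator, and that the support of an element of `im T` lies in `Red(T)`. If now `v' ∈ v + ker T`
and `g ∈ supp (T v) \ supp v'`, the leading generator `m` of `v' - T v ∈ ker T` lies above `g`,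
outside `Red(T) ⊇ supp (T v)`, hence in `supp v'`.
-/

namespace RedOp

variable {K G : Type*} [Field K] [LinearOrder G] (T : Module.End K (G →₀ K))

def IsReduced (g : G) : Prop :=
  T (Finsupp.single g 1) = Finsupp.single g 1

def IsReducing : Prop :=
  ∀ g : G, IsReduced T g ∨ ∀ g' ∈ (T (Finsupp.single g 1)).support, g' < g

variable {T}

theorem _root_.IsRedOp.isReducing (hT : IsRedOp T) : IsReducing T := hT.2

theorem _root_.IsRedOp.apply_apply (hT : IsRedOp T) (v : G →₀ K) : T (T v) = T v :=
  LinearMap.congr_fun hT.1 v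

theorem apply_single_apply_of_ne (hT : IsReducing T) {g m : G} (hgm : g ≠ m)
    (hg : m < g → IsReduced T g) : T (Finsupp.single g 1) m = 0 := by
  rcases hT g with hred | hlt
  · rw [hred, Finsupp.single_eq_of_ne' hgm]
  · by_cases hmg : m < g
    · rw [hg hmg, Finsupp.single_eq_of_ne' hgm]
    · exact Finsupp.notMem_support_iff.mp fun hm => hmg (hlt m hm)

theorem apply_single_apply_self_of_not_isReduced (hT : IsReducing T) {g : G}
    (hg : ¬ IsReduced T g) : T (Finsupp.single g 1) g = 0 :=
  Finsupp.notMem_support_iff.mp fun hmem => lt_irrefl g ((hT g).resolve_left hg g hmem)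

theorem apply_apply_eq_mul (hT : IsReducing T) {u : G →₀ K} {m : G}
    (hu : ∀ h ∈ u.support, m < h → IsReduced T h) :
    T u m = u m * T (Finsupp.single m 1) m := by
  have hexpand : T u = ∑ h ∈ u.support, u h • T (Finsupp.single h 1) := by
    conv_lhs => rw [← Finsupp.sum_single u]
    simp only [Finsupp.sum, map_sum, ← map_smul, Finsupp.smul_single', mul_one]
  rw [hexpand, Finsupp.finsetSum_apply, Finset.sum_eq_single m]
  · rw [Finsupp.smul_apply, smul_eq_mul]
  · intro h hh hhm
    rw [Finsupp.smul_apply, apply_single_apply_of_ne hT hhm (hu h hh), smul_zero]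
  · intro hm
    rw [Finsupp.notMem_support_iff.mp hm, zero_smul, Finsupp.zero_apply]

theorem not_isReduced_max'_support_of_apply_eq_zero (hT : IsReducing T) {u : G →₀ K}
    (hu : T u = 0) (hne : u.support.Nonempty) : ¬ IsReduced T (u.support.max' hne) := by
  intro hred
  have hlead := apply_apply_eq_mul hT (u := u) (m := u.support.max' hne)
    fun h hh hlt => absurd (u.support.le_max' h hh) hlt.not_ge
  rw [hu, hred, Finsupp.single_eq_same, mul_one] at hlead
  exact Finsupp.mem_support_iff.mp (u.support.max'_mem hne) hlead.symm

theorem isReduced_of_mem_support_of_apply_eq_self (hT : IsReducing T) {w : G →₀ K}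
    (hw : T w = w) {g : G} (hg : g ∈ w.support) : IsReduced T g := by
  classical
  by_contra hg'
  set S := w.support.filter (¬ IsReduced T ·)
  have hS : S.Nonempty := ⟨g, Finset.mem_filter.mpr ⟨hg, hg'⟩⟩
  obtain ⟨hn, hnred⟩ := Finset.mem_filter.mp (S.max'_mem hS)
  have hlead := apply_apply_eq_mul hT (u := w) (m := S.max' hS) fun h hh hlt =>
    by_contra fun hh' => (S.le_max' h (Finset.mem_filter.mpr ⟨hh, hh'⟩)).not_gt hlt
  rw [hw, apply_single_apply_self_of_not_isReduced hT hnred, mul_zero] at hlead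
  exact Finsupp.mem_support_iff.mp hn hlead

end RedOp

open RedOp

theorem inf_is_min_of_class_general {K G : Type*} [Field K] [LinearOrder G]
    (W : Module.End K (G →₀ K)) (hW : IsRedOp W)
    (v : G →₀ K) :
    W v - v ∈ LinearMap.ker W ∧
      ∀ v' : G →₀ K, v' - v ∈ LinearMap.ker W → MulLE (W v) v' := by
  have hWW : W (W v) = W v := hW.apply_apply v
  refine ⟨by rw [LinearMap.mem_ker, map_sub, hWW, sub_self], fun v' hv' g hg hg' => ?_⟩
  set u := v' - W v
  have hu : W u = 0 := by
    rw [LinearMap.mem_ker, map_sub, sub_eq_zero] at hv'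
    rw [map_sub, hv', hWW, sub_self]
  have hgu : g ∈ u.support := by
    rw [Finsupp.mem_support_iff, Finsupp.sub_apply, Finsupp.notMem_support_iff.mp hg', zero_sub,
      neg_ne_zero]
    exact Finsupp.mem_support_iff.mp hg
  set m := u.support.max' ⟨g, hgu⟩
  have hm : ¬ IsReduced W m := not_isReduced_max'_support_of_apply_eq_zero hW.isReducing hu _
  have hmWv : m ∉ (W v).support := fun hmem =>
    hm (isReduced_of_mem_support_of_apply_eq_self hW.isReducing hWW hmem)
  refine ⟨m, ?_, hmWv, ?_⟩
  · have hum := Finsupp.mem_support_iff.mp (u.support.max'_mem ⟨g, hgu⟩)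
    rwa [Finsupp.sub_apply, Finsupp.notMem_support_iff.mp hmWv, sub_zero,
      ← Finsupp.mem_support_iff] at hum
  · have hgm : g ≤ m := u.support.le_max' g hgu
    exact hgm.lt_of_ne fun heq => hmWv (heq ▸ hg)

/-- `(∧F)(v)` is the smallest element, for the multiset order, of the class
`[v] = {v' | v' - v ∈ ker(∧F)}`.  Here `W` denotes `∧F`. -/
theorem inf_is_min_of_class {K G : Type*} [Field K] [LinearOrder G]
    [WellFoundedLT G] (F : Set (Module.End K (G →₀ K)))
    (hF : ∀ T ∈ F, IsRedOp T) (W : Module.End K (G →₀ K)) (hW : IsRedOp W)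
    (hker : LinearMap.ker W = ⨆ T ∈ F, LinearMap.ker T) (v : G →₀ K) :
    W v - v ∈ LinearMap.ker W ∧
      ∀ v' : G →₀ K, v' - v ∈ LinearMap.ker W → MulLE (W v) v' :=
  inf_is_min_of_class_general W hW v
end

section
/- A set F of reduction operators relative to a well-ordered set (G,<) is confluent if and only if it is locally confluent, i.e., for every v ∈ K⟨G⟩ and all T₁, T₂ ∈ F, there exists v' such that both T₁(v) and T₂(v) rewrite into v'. (Newman's Lemma for reduction operators.) -/
theorem Relation.newman {α : Type*} {r : α → α → Prop} (hwf : WellFounded (flip r))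
    (hlc : ∀ a b c, r a b → r a c → Join (ReflTransGen r) b c) {a b c : α}
    (hab : ReflTransGen r a b) (hac : ReflTransGen r a c) : Join (ReflTransGen r) b c := by
  induction a using hwf.induction generalizing b c with
  | _ a ih =>
  rcases hab.cases_head with rfl | ⟨b₁, hab₁, hb₁b⟩
  · exact ⟨c, hac, .refl⟩
  rcases hac.cases_head with rfl | ⟨c₁, hac₁, hc₁c⟩
  · exact ⟨b, .refl, hab⟩
  obtain ⟨d, hb₁d, hc₁d⟩ := hlc a b₁ c₁ hab₁ hac₁
  obtain ⟨e, hbe, hde⟩ := ih b₁ hab₁ hb₁b hb₁d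
  obtain ⟨f, hef, hcf⟩ := ih c₁ hac₁ (hc₁d.trans hde) hc₁c
  exact ⟨f, hbe.trans hef, hcf⟩

theorem LinearMap.comp_eq_of_isIdempotentElem_of_ker_le {R M : Type*} [Ring R]
    [AddCommGroup M] [Module R M] {T W : Module.End R M} (hT : IsIdempotentElem T)
    (hker : ker T ≤ ker W) : W ∘ₗ T = W := by
  refine ext fun v => ?_
  have hv : v - T v ∈ ker T := by
    rw [mem_ker, map_sub, ← Module.End.mul_apply, hT.eq, sub_self]
  rw [comp_apply, eq_comm, ← sub_eq_zero, ← map_sub]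
  exact hker hv

theorem Finset.exists_greatest_of_exists {G : Type*} [LinearOrder G] {s : Finset G}
    {p : G → Prop} (h : ∃ k ∈ s, p k) : ∃ g ∈ s, p g ∧ ∀ k ∈ s, p k → k ≤ g := by
  classical
  obtain ⟨g, hg, hmax⟩ := exists_max_image (s.filter p) id (by simpa [Finset.Nonempty])
  rw [mem_filter] at hg
  exact ⟨g, hg.1, hg.2, fun k hk hpk => hmax k (mem_filter.mpr ⟨hk, hpk⟩)⟩

section

open Finsupp Relation

namespace Finsupp

variable {R G : Type*} [Semiring R]

theorem linearMap_apply_apply_eq_sum (f : Module.End R (G →₀ R)) (v : G →₀ R) (h : G) :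
    f v h = ∑ k ∈ v.support, v k * f (single k 1) h := by
  conv_lhs => rw [← sum_single v, Finsupp.sum, map_sum, finsetSum_apply]
  refine Finset.sum_congr rfl fun k _ => ?_
  rw [← smul_single_one, map_smul, smul_apply, smul_eq_mul]

theorem apply_eq_sum (v : G →₀ R) (h : G) :
    v h = ∑ k ∈ v.support, v k * single k (1 : R) h :=
  linearMap_apply_apply_eq_sum 1 v h

theorem linearMap_apply_eq_self_of_forall_mem_support {f : Module.End R (G →₀ R)}
    {v : G →₀ R} (hv : ∀ k ∈ v.support, f (single k 1) = single k 1) : f v = v := by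
  ext h
  rw [linearMap_apply_apply_eq_sum, apply_eq_sum v]
  exact Finset.sum_congr rfl fun k hk => by rw [hv k hk]

open scoped Classical in
noncomputable def supportIndicator {M : Type*} [Zero M] (v : G →₀ M) : G →₀ ℕ :=
  mapRange (fun c => if c = 0 then 0 else 1) (by simp) v

open scoped Classical in
theorem supportIndicator_apply {M : Type*} [Zero M] (v : G →₀ M) (g : G) :
    supportIndicator v g = if v g = 0 then 0 else 1 :=
  mapRange_apply ..

end Finsupp

variable {K G : Type*} [Field K]

/-- Trivial steps `T v = v` are excluded so that the relation terminates; its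
reflexive-transitive closure is still "rewrites into". -/
def RewriteStep (F : Set (Module.End K (G →₀ K))) (v w : G →₀ K) : Prop :=
  ∃ T ∈ F, T v = w ∧ w ≠ v

namespace RewriteStep

variable {F : Set (Module.End K (G →₀ K))}

theorem reflTransGen_apply {R : Module.End K (G →₀ K)} (hR : R ∈ Submonoid.closure F)
    (v : G →₀ K) : ReflTransGen (RewriteStep F) v (R v) := by
  induction hR using Submonoid.closure_induction generalizing v with
  | mem T hT =>
    by_cases hTv : T v = v
    · rw [hTv]
    · exact .single ⟨T, hT, rfl, hTv⟩
  | one => exact .refl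
  | mul R S _ _ hR hS => exact (hS v).trans (hR (S v))

theorem eq_of_reflTransGen {v w : G →₀ K} (hv : ∀ T ∈ F, T v = v)
    (h : ReflTransGen (RewriteStep F) v w) : w = v := by
  rcases h.cases_head with rfl | ⟨u, ⟨T, hT, hTv, hne⟩, _⟩
  · rfl
  · exact absurd (hTv ▸ hv T hT) hne

theorem join_of_sub_mem_iSup_ker (hconf : Equivalence (Join (ReflTransGen (RewriteStep F))))
    {v w : G →₀ K} (h : v - w ∈ ⨆ T ∈ F, LinearMap.ker T) :
    Join (ReflTransGen (RewriteStep F)) v w := by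
  suffices key : ∀ u ∈ ⨆ T ∈ F, LinearMap.ker T, ∀ w,
      Join (ReflTransGen (RewriteStep F)) (w + u) w by
    simpa using key _ h w
  intro u hu
  rw [iSup_subtype'] at hu
  refine Submodule.iSup_induction _ (motive := fun u => ∀ w,
    Join (ReflTransGen (RewriteStep F)) (w + u) w) hu (fun ⟨T, hT⟩ u hu w => ?_)
    (by simpa using hconf.refl) fun x y hx hy w => ?_
  · refine ⟨T w, ?_, reflTransGen_apply (Submonoid.subset_closure hT) w⟩
    simpa [LinearMap.mem_ker.mp hu] using reflTransGen_apply (Submonoid.subset_closure hT) (w + u)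
  · rw [add_comm x y, ← add_assoc]
    exact hconf.trans (hx (w + y)) (hy w)

end RewriteStep

variable [LinearOrder G]

namespace IsRedOp

variable {T : Module.End K (G →₀ K)}

theorem isIdempotentElem (hT : IsRedOp T) : IsIdempotentElem T := hT.1

theorem apply_single_apply_eq_zero (hT : IsRedOp T) {k h : G}
    (hk : T (single k 1) ≠ single k 1) (hkh : k ≤ h) : T (single k 1) h = 0 := by
  by_contra hne
  exact (hkh.trans_lt ((hT.2 k).resolve_left hk h (mem_support_iff.mpr hne))).false

theorem apply_apply_eq_of_forall_lt (hT : IsRedOp T) {v : G →₀ K} {h : G}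
    (hv : ∀ k ∈ v.support, T (single k 1) ≠ single k 1 → k < h) : T v h = v h := by
  rw [linearMap_apply_apply_eq_sum, apply_eq_sum v]
  refine Finset.sum_congr rfl fun k hk => ?_
  by_cases hkT : T (single k 1) = single k 1
  · rw [hkT]
  · have hkh := hv k hk hkT
    rw [hT.apply_single_apply_eq_zero hkT hkh.le, single_eq_of_ne hkh.ne', mul_zero]

theorem apply_apply_eq_zero_of_forall_le (hT : IsRedOp T) {v : G →₀ K} {g : G}
    (hv : ∀ k ∈ v.support, T (single k 1) ≠ single k 1 → k ≤ g)
    (hg : T (single g 1) ≠ single g 1) : T v g = 0 := by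
  rw [linearMap_apply_apply_eq_sum]
  refine Finset.sum_eq_zero fun k hk => ?_
  by_cases hkT : T (single k 1) = single k 1
  · rw [hkT, single_eq_of_ne (by rintro rfl; exact hg hkT), mul_zero]
  · rw [hT.apply_single_apply_eq_zero hkT (hv k hk hkT), mul_zero]

theorem apply_eq_self_iff (hT : IsRedOp T) {v : G →₀ K} :
    T v = v ↔ ∀ k ∈ v.support, T (single k 1) = single k 1 := by
  refine ⟨fun hv => ?_, linearMap_apply_eq_self_of_forall_mem_support⟩
  by_contra! hred
  obtain ⟨g, hgv, hgT, hmax⟩ := Finset.exists_greatest_of_exists hred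
  have hTvg := hT.apply_apply_eq_zero_of_forall_le hmax hgT
  rw [hv] at hTvg
  exact mem_support_iff.mp hgv hTvg

theorem toColex_supportIndicator_apply_lt (hT : IsRedOp T) {v : G →₀ K} (hv : T v ≠ v) :
    toColex (supportIndicator (T v)) < toColex (supportIndicator v) := by
  have hred : ∃ k ∈ v.support, T (single k 1) ≠ single k 1 := by
    contrapose! hv
    exact hT.apply_eq_self_iff.mpr hv
  obtain ⟨g, hgv, hgT, hmax⟩ := Finset.exists_greatest_of_exists hred
  refine Colex.lt_iff.mpr ⟨g, fun h hgh => ?_, ?_⟩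
  · rw [ofColex_toColex, ofColex_toColex, supportIndicator_apply, supportIndicator_apply,
      hT.apply_apply_eq_of_forall_lt fun k hk hkT => (hmax k hk hkT).trans_lt hgh]
  · simp [supportIndicator_apply, hT.apply_apply_eq_zero_of_forall_le hmax hgT,
      mem_support_iff.mp hgv]

theorem support_lt_of_forall_lt (hT : IsRedOp T) {v : G →₀ K} {g : G}
    (hv : ∀ k ∈ v.support, k < g) : ∀ h ∈ (T v).support, h < g := by
  intro h hh
  by_contra! hgh
  rw [mem_support_iff, hT.apply_apply_eq_of_forall_lt fun k hk _ => (hv k hk).trans_le hgh,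
    ← mem_support_iff] at hh
  exact (hv h hh).not_ge hgh

end IsRedOp

namespace RewriteStep

variable {F : Set (Module.End K (G →₀ K))}

theorem wellFounded_flip [WellFoundedLT G] (hF : ∀ T ∈ F, IsRedOp T) :
    WellFounded (flip (RewriteStep F)) := by
  refine Subrelation.wf ?_ (InvImage.wf (fun v => toColex (supportIndicator v)) wellFounded_lt)
  rintro w v ⟨T, hT, rfl, hne⟩
  exact (hF T hT).toColex_supportIndicator_apply_lt hne

theorem support_lt_of_reflTransGen (hF : ∀ T ∈ F, IsRedOp T) {v w : G →₀ K} {g : G}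
    (h : ReflTransGen (RewriteStep F) v w) (hv : ∀ k ∈ v.support, k < g) :
    ∀ k ∈ w.support, k < g := by
  induction h with
  | refl => exact hv
  | tail _ hstep ih =>
    obtain ⟨T, hT, rfl, -⟩ := hstep
    exact (hF T hT).support_lt_of_forall_lt ih

theorem equivalence_join_of_locally_confluent [WellFoundedLT G] (hF : ∀ T ∈ F, IsRedOp T)
    (hloc : ∀ v : G →₀ K, ∀ T₁ ∈ F, ∀ T₂ ∈ F, ∃ v' : G →₀ K,
      (∃ R₁ ∈ Submonoid.closure F, R₁ (T₁ v) = v') ∧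
      (∃ R₂ ∈ Submonoid.closure F, R₂ (T₂ v) = v')) :
    Equivalence (Join (ReflTransGen (RewriteStep F))) := by
  refine equivalence_join fun _ _ _ => newman (wellFounded_flip hF) ?_
  rintro v _ _ ⟨T₁, hT₁, rfl, -⟩ ⟨T₂, hT₂, rfl, -⟩
  obtain ⟨v', ⟨R₁, hR₁, rfl⟩, ⟨R₂, hR₂, hv'⟩⟩ := hloc v T₁ hT₁ T₂ hT₂
  exact ⟨_, reflTransGen_apply hR₁ _, hv' ▸ reflTransGen_apply hR₂ _⟩

end RewriteStep

variable {F : Set (Module.End K (G →₀ K))} {W : Module.End K (G →₀ K)}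

theorem exists_mem_closure_apply_eq_apply [WellFoundedLT G] (hF : ∀ T ∈ F, IsRedOp T)
    (hker : ∀ T ∈ F, LinearMap.ker T ≤ LinearMap.ker W)
    (hred : ∀ g : G, (∀ T ∈ F, T (single g 1) = single g 1) → W (single g 1) = single g 1)
    (v : G →₀ K) : ∃ R ∈ Submonoid.closure F, R v = W v := by
  induction v using (RewriteStep.wellFounded_flip hF).induction with
  | _ v ih =>
  by_cases hfix : ∀ T ∈ F, T v = v
  · refine ⟨1, one_mem _, (linearMap_apply_eq_self_of_forall_mem_support fun k hk =>
      hred k fun T hT => (hF T hT).apply_eq_self_iff.mp (hfix T hT) k hk).symm⟩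
  obtain ⟨T, hT, hTv⟩ := not_forall₂.mp hfix
  obtain ⟨R, hR, hRTv⟩ := ih (T v) ⟨T, hT, rfl, hTv⟩
  refine ⟨R * T, mul_mem hR (Submonoid.subset_closure hT), ?_⟩
  rw [Module.End.mul_apply, hRTv, ← LinearMap.comp_apply,
    LinearMap.comp_eq_of_isIdempotentElem_of_ker_le (hF T hT).isIdempotentElem (hker T hT)]

theorem apply_single_eq_of_equivalence_join (hF : ∀ T ∈ F, IsRedOp T) (hW : IsRedOp W)
    (hker : LinearMap.ker W ≤ ⨆ T ∈ F, LinearMap.ker T)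
    (hconf : Equivalence (Join (ReflTransGen (RewriteStep F)))) {g : G}
    (hg : ∀ T ∈ F, T (single g 1) = single g 1) : W (single g 1) = single g 1 := by
  refine (hW.2 g).resolve_right fun hlt => ?_
  have hsub : single g 1 - W (single g 1) ∈ LinearMap.ker W := by
    rw [LinearMap.mem_ker, map_sub, ← Module.End.mul_apply, hW.isIdempotentElem.eq, sub_self]
  obtain ⟨d, hgd, hWd⟩ := RewriteStep.join_of_sub_mem_iSup_ker hconf (hker hsub)
  rw [RewriteStep.eq_of_reflTransGen hg hgd] at hWd
  exact lt_irrefl g (RewriteStep.support_lt_of_reflTransGen hF hWd hlt g (by simp))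

end

/-- Newman's Lemma for reduction operators: `F` is confluent iff it is locally
confluent.  Here `W` denotes `∧F`. -/
theorem confluent_iff_locally_confluent {K G : Type*} [Field K] [LinearOrder G]
    [WellFoundedLT G] (F : Set (Module.End K (G →₀ K)))
    (hF : ∀ T ∈ F, IsRedOp T) (W : Module.End K (G →₀ K)) (hW : IsRedOp W)
    (hker : LinearMap.ker W = ⨆ T ∈ F, LinearMap.ker T) :
    ({g : G | ∀ T ∈ F, T (Finsupp.single g 1) = Finsupp.single g 1} ⊆
        {g : G | W (Finsupp.single g 1) = Finsupp.single g 1}) ↔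
      ∀ v : G →₀ K, ∀ T₁ ∈ F, ∀ T₂ ∈ F, ∃ v' : G →₀ K,
        (∃ R₁ ∈ Submonoid.closure F, R₁ (T₁ v) = v') ∧
        (∃ R₂ ∈ Submonoid.closure F, R₂ (T₂ v) = v') := by
  have hker_le : ∀ T ∈ F, LinearMap.ker T ≤ LinearMap.ker W := fun T hT =>
    hker ▸ le_biSup (fun T => LinearMap.ker T) hT
  refine ⟨fun hred v T₁ hT₁ T₂ hT₂ => ?_, fun hloc g hg =>
    apply_single_eq_of_equivalence_join hF hW hker.le
      (RewriteStep.equivalence_join_of_locally_confluent hF hloc) hg⟩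
  have hW_apply : ∀ T ∈ F, W (T v) = W v := fun T hT => LinearMap.congr_fun
    (LinearMap.comp_eq_of_isIdempotentElem_of_ker_le (hF T hT).isIdempotentElem (hker_le T hT)) v
  obtain ⟨R₁, hR₁, h₁⟩ := exists_mem_closure_apply_eq_apply hF hker_le (fun g hg => hred hg) (T₁ v)
  obtain ⟨R₂, hR₂, h₂⟩ := exists_mem_closure_apply_eq_apply hF hker_le (fun g hg => hred hg) (T₂ v)
  exact ⟨W v, ⟨R₁, hR₁, h₁.trans (hW_apply T₁ hT₁)⟩, ⟨R₂, hR₂, h₂.trans (hW_apply T₂ hT₂)⟩⟩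
end

section
/- For all v₁, v₂ ∈ K⟨G⟩, v₁ and v₂ are related by the reflexive transitive symmetric closure of the rewriting relation →_F if and only if v₁ − v₂ ∈ ker(∧F). -/
/-- The one-step rewriting relation associated with a set `F` of reduction
operators: `v →_F v'` if some `T ∈ F` satisfies `v ∉ K⟨Red(T)⟩` and `v' = T v`. -/
def RedStep {K G : Type*} [Field K] [LinearOrder G]
    (F : Set (Module.End K (G →₀ K))) (v v' : G →₀ K) : Prop :=
  ∃ T ∈ F, v ∉ Submodule.span K
      ((fun g => Finsupp.single g (1 : K)) ''
        {g : G | T (Finsupp.single g 1) = Finsupp.single g 1}) ∧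
    v' = T v

theorem LinearMap.apply_eq_self_of_mem_span {R M : Type*} [Semiring R] [AddCommMonoid M]
    [Module R M] (f : M →ₗ[R] M) {s : Set M} (hs : s ⊆ Function.fixedPoints f) {x : M}
    (hx : x ∈ Submodule.span R s) : f x = x :=
  (Submodule.span_le (p := LinearMap.eqLocus f LinearMap.id)).mpr hs hx

theorem Relation.EqvGen.sub_mem {R M : Type*} [Ring R] [AddCommGroup M] [Module R M]
    {r : M → M → Prop} {p : Submodule R M} (hr : ∀ x y, r x y → x - y ∈ p) {x y : M}
    (h : Relation.EqvGen r x y) : x - y ∈ p := by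
  induction h with
  | rel x y hxy => exact hr x y hxy
  | refl x => simp
  | symm x y _ ih => simpa using p.neg_mem ih
  | trans x y z _ _ ihxy ihyz => simpa using p.add_mem ihxy ihyz

namespace RedStep

variable {K G : Type*} [Field K] [LinearOrder G] {F : Set (Module.End K (G →₀ K))}

theorem sub_mem_iSup_ker (hF : ∀ T ∈ F, T ∘ₗ T = T) {v v' : G →₀ K} (h : RedStep F v v') :
    v - v' ∈ ⨆ T ∈ F, LinearMap.ker T := by
  obtain ⟨T, hT, -, rfl⟩ := h
  have hker : v - T v ∈ LinearMap.ker T := by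
    rw [LinearMap.mem_ker, map_sub, ← LinearMap.comp_apply, hF T hT, sub_self]
  exact Submodule.mem_iSup_of_mem T (Submodule.mem_iSup_of_mem hT hker)

theorem eqvGen_self_apply {T : Module.End K (G →₀ K)} (hT : T ∈ F) (v : G →₀ K) :
    Relation.EqvGen (RedStep F) v (T v) := by
  by_cases hv : v ∈ Submodule.span K
      ((fun g => Finsupp.single g (1 : K)) ''
        {g : G | T (Finsupp.single g 1) = Finsupp.single g 1})
  · rw [T.apply_eq_self_of_mem_span (Set.image_subset_iff.mpr fun _ hg => hg) hv]
    exact Relation.EqvGen.refl v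
  · exact Relation.EqvGen.rel _ _ ⟨T, hT, hv, rfl⟩

theorem eqvGen_add_of_mem_ker {T : Module.End K (G →₀ K)} (hT : T ∈ F) {u : G →₀ K}
    (hu : u ∈ LinearMap.ker T) (v : G →₀ K) : Relation.EqvGen (RedStep F) v (v + u) := by
  have hTu : T (v + u) = T v := by rw [map_add, LinearMap.mem_ker.mp hu, add_zero]
  refine (eqvGen_self_apply hT v).trans _ _ _ ?_
  rw [← hTu]
  exact (eqvGen_self_apply hT (v + u)).symm

theorem eqvGen_add_of_mem_iSup_ker {u : G →₀ K} (hu : u ∈ ⨆ T ∈ F, LinearMap.ker T)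
    (v : G →₀ K) : Relation.EqvGen (RedStep F) v (v + u) := by
  rw [iSup_subtype'] at hu
  induction hu using Submodule.iSup_induction' generalizing v with
  | mem T u hu => exact eqvGen_add_of_mem_ker T.2 hu v
  | zero => simpa using Relation.EqvGen.refl v
  | add x y _ _ hx hy => simpa [add_assoc] using (hx v).trans _ _ _ (hy (v + x))

end RedStep

theorem eqvGen_iff_sub_mem_ker_general {K G : Type*} [Field K] [LinearOrder G]
    (F : Set (Module.End K (G →₀ K)))
    (hF : ∀ T ∈ F, IsRedOp T) (W : Module.End K (G →₀ K))
    (hker : LinearMap.ker W = ⨆ T ∈ F, LinearMap.ker T) (v₁ v₂ : G →₀ K) :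
    Relation.EqvGen (RedStep F) v₁ v₂ ↔ v₁ - v₂ ∈ LinearMap.ker W := by
  rw [hker]
  refine ⟨Relation.EqvGen.sub_mem fun _ _ => RedStep.sub_mem_iSup_ker fun T hT => (hF T hT).1,
    fun h => ?_⟩
  simpa using (RedStep.eqvGen_add_of_mem_iSup_ker h v₂).symm

/-- `v₁ ↔*_F v₂` iff `v₁ - v₂ ∈ ker(∧F)`.  Here `W` denotes `∧F`. -/
theorem eqvGen_iff_sub_mem_ker {K G : Type*} [Field K] [LinearOrder G]
    [WellFoundedLT G] (F : Set (Module.End K (G →₀ K)))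
    (hF : ∀ T ∈ F, IsRedOp T) (W : Module.End K (G →₀ K)) (hW : IsRedOp W)
    (hker : LinearMap.ker W = ⨆ T ∈ F, LinearMap.ker T) (v₁ v₂ : G →₀ K) :
    Relation.EqvGen (RedStep F) v₁ v₂ ↔ v₁ - v₂ ∈ LinearMap.ker W :=
  eqvGen_iff_sub_mem_ker_general F hF W hker v₁ v₂
end

section
/- Let F be a set of reduction operators relative to a well-ordered set (G,<). The F-complement C^F = (∧F) ∨ (∨F̄), where ∨F̄ is the reduction operator with kernel K⟨Red(F)⟩, is a minimal complement of F: it satisfies (∧F) ∧ C^F = ∧F and the set of non-C^F-reduced generators equals exactly the set of obstructions Obs(F) = Red(F) \ Red(∧F). -/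
open Finsupp Set

theorem Finsupp.mem_supported_sdiff_singleton {α R M : Type*} [Semiring R] [AddCommMonoid M]
    [Module R M] {t : Set α} {a : α} {x : α →₀ M} (hx : x ∈ supported M R t) (ha : x a = 0) :
    x ∈ supported M R (t \ {a}) := by
  rw [mem_supported'] at hx ⊢
  intro b hb
  by_cases hba : b = a
  · rw [hba, ha]
  · exact hx b fun hbt => hb ⟨hbt, hba⟩

section LeadingMonomials

variable {K G : Type*} [Field K] [LinearOrder G]

def leadingMonomials (V : Submodule K (G →₀ K)) : Set G :=
  {g | ∃ v ∈ V, v ∈ supported K K (Iic g) ∧ v g ≠ 0}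

theorem leadingMonomials_mono : Monotone (leadingMonomials (K := K) (G := G)) :=
  fun _ _ hVV' _ ⟨v, hv, hvg, hv0⟩ => ⟨v, hVV' hv, hvg, hv0⟩

theorem exists_mem_inf_supported_sub_mem_supported_Iio [WellFoundedLT G]
    {V : Submodule K (G →₀ K)} {s : Set G} (hs : sᶜ ⊆ leadingMonomials V) (h : G)
    {v : G →₀ K} (hv : v ∈ V) (hvs : v ∈ supported K K (s ∪ Iio h)) :
    ∃ v' ∈ V ⊓ supported K K s, v - v' ∈ supported K K (Iio h) := by
  classical
  induction h using WellFoundedLT.induction generalizing v with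
  | ind h ih =>
  by_cases hvs' : v ∈ supported K K s
  · exact ⟨v, ⟨hv, hvs'⟩, by simp⟩
  obtain ⟨b, hb, hb_max⟩ := (v.support.filter (· ∉ s)).exists_max_image id (by
    obtain ⟨b, hbv, hbs⟩ := Set.not_subset.mp hvs'
    exact ⟨b, Finset.mem_filter.mpr ⟨hbv, hbs⟩⟩)
  obtain ⟨hbv, hbs⟩ := Finset.mem_filter.mp hb
  have hbh : b < h := (hvs hbv).resolve_left hbs
  obtain ⟨w, hwV, hwb, hw0⟩ := hs hbs
  -- subtracting a multiple of `w` cancels the largest coefficient outside `s`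
  set c := v b / w b
  have hv_Iic : v ∈ supported K K (s ∪ Iic b) := fun a ha => by
    by_cases has : a ∈ s
    · exact Or.inl has
    · exact Or.inr (hb_max a (Finset.mem_filter.mpr ⟨ha, has⟩))
  have hv₂ : v - c • w ∈ supported K K (s ∪ Iio b) := by
    have hsub : (s ∪ Iic b) \ {b} ⊆ s ∪ Iio b := fun a ha => ha.1.imp_right (lt_of_le_of_ne · ha.2)
    refine supported_mono hsub
      (mem_supported_sdiff_singleton (sub_mem hv_Iic (Submodule.smul_mem _ c ?_)) ?_)
    · exact supported_mono subset_union_right hwb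
    · simp [c, hw0]
  obtain ⟨v', hv', hd⟩ := ih b hbh (sub_mem hv (Submodule.smul_mem _ c hwV)) hv₂
  refine ⟨v', hv', ?_⟩
  rw [show v - v' = (v - c • w - v') + c • w by abel]
  exact supported_mono (Iic_subset_Iio.mpr hbh)
    (add_mem (supported_mono Iio_subset_Iic_self hd) (Submodule.smul_mem _ c hwb))

theorem leadingMonomials_inf_supported [WellFoundedLT G] {V : Submodule K (G →₀ K)}
    {s : Set G} (hs : sᶜ ⊆ leadingMonomials V) :
    leadingMonomials (V ⊓ supported K K s) = leadingMonomials V ∩ s := by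
  ext g
  constructor
  · rintro ⟨v, ⟨hvV, hvs⟩, hvg, hv0⟩
    exact ⟨⟨v, hvV, hvg, hv0⟩, by_contra fun hgs => hv0 ((mem_supported' K v).mp hvs g hgs)⟩
  · rintro ⟨⟨v, hvV, hvg, hv0⟩, hgs⟩
    have hv_Iio : v ∈ supported K K (s ∪ Iio g) := fun a ha =>
      (eq_or_lt_of_le (hvg ha)).imp (fun hag : a = g => hag ▸ hgs) id
    obtain ⟨v', hv', hd⟩ := exists_mem_inf_supported_sub_mem_supported_Iio hs g hvV hv_Iio
    refine ⟨v', hv', ?_, ?_⟩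
    · simpa using sub_mem hvg (supported_mono Iio_subset_Iic_self hd)
    · have hdg : v g - v' g = 0 := (mem_supported' K _).mp hd g (lt_irrefl g)
      rwa [← sub_eq_zero.mp hdg]

end LeadingMonomials

namespace IsRedOp

variable {K G : Type*} [Field K] [LinearOrder G] {T : Module.End K (G →₀ K)}

theorem supported_le_comap (hT : IsRedOp T) {s : Set G} (hs : IsLowerSet s) :
    supported K K s ≤ (supported K K s).comap T := by
  refine (supported_eq_span_single K s).le.trans (Submodule.span_le.mpr ?_)
  rintro _ ⟨b, hb, rfl⟩
  rcases hT.2 b with hfix | hlt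
  · change T (single b 1) ∈ supported K K s
    rw [hfix]
    exact single_mem_supported K 1 hb
  · exact fun a ha => hs (hlt a ha).le hb

theorem apply_single_mem_supported_Iio (hT : IsRedOp T) {g : G}
    (hg : T (single g 1) ≠ single g 1) : T (single g 1) ∈ supported K K (Iio g) :=
  (hT.2 g).resolve_left hg

theorem sub_apply_mem_ker (hT : IsRedOp T) (x : G →₀ K) : x - T x ∈ LinearMap.ker T := by
  rw [LinearMap.mem_ker, map_sub, ← LinearMap.comp_apply, hT.1, sub_self]

theorem apply_eq_zero_of_mem_ker (hT : IsRedOp T) {g : G} (hg : T (single g 1) = single g 1)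
    {v : G →₀ K} (hv : v ∈ LinearMap.ker T) (hvg : v ∈ supported K K (Iic g)) : v g = 0 := by
  set u := v - single g (v g)
  have hu : u ∈ supported K K (Iio g) := by
    rw [← Iic_sdiff_right]
    exact mem_supported_sdiff_singleton (sub_mem hvg (single_mem_supported K _ self_mem_Iic))
      (by simp [u])
  have hTu : T u g = 0 := (mem_supported' K _).mp (hT.supported_le_comap (isLowerSet_Iio g) hu) g
    (lt_irrefl g)
  have hTv : T v = T u + single g (v g) :=
    calc T v = T (u + v g • single g 1) := by rw [smul_single_one, sub_add_cancel]
      _ = T u + single g (v g) := by rw [map_add, map_smul, hg, smul_single_one]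
  have hTvg : T v g = 0 := by rw [LinearMap.mem_ker.mp hv, Finsupp.zero_apply]
  simpa [hTv, hTu] using hTvg

theorem nonReduced_eq_leadingMonomials (hT : IsRedOp T) :
    {g | T (single g 1) ≠ single g 1} = leadingMonomials (LinearMap.ker T) := by
  ext g
  refine ⟨fun hg => ⟨single g 1 - T (single g 1), hT.sub_apply_mem_ker _, ?_, ?_⟩, ?_⟩
  · exact sub_mem (single_mem_supported K 1 self_mem_Iic)
      (supported_mono Iio_subset_Iic_self (hT.apply_single_mem_supported_Iio hg))
  · simp [(mem_supported' K _).mp (hT.apply_single_mem_supported_Iio hg) g (lt_irrefl g)]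
  · rintro ⟨v, hv, hvg, hv0⟩ hg
    exact hv0 (hT.apply_eq_zero_of_mem_ker hg hv hvg)

end IsRedOp

/-- `W = ∧F`, `Vbar = ∨F̄` and `CF = C^F`; through the kernel bijection, `(∧F) ∧ C^F = ∧F`
reads `ker W ⊔ ker CF = ker W`. -/
theorem F_complement_minimal_general {K G : Type*} [Field K] [LinearOrder G]
    [WellFoundedLT G] (F : Set (Module.End K (G →₀ K)))
    (hF : ∀ T ∈ F, IsRedOp T) (W Vbar CF : Module.End K (G →₀ K))
    (hW : IsRedOp W) (hCF : IsRedOp CF)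
    (hkerW : LinearMap.ker W = ⨆ T ∈ F, LinearMap.ker T)
    (hkerVbar : LinearMap.ker Vbar = Submodule.span K
      ((fun g => Finsupp.single g (1 : K)) ''
        {g : G | ∀ T ∈ F, T (Finsupp.single g 1) = Finsupp.single g 1}))
    (hkerCF : LinearMap.ker CF = LinearMap.ker W ⊓ LinearMap.ker Vbar) :
    LinearMap.ker W ⊔ LinearMap.ker CF = LinearMap.ker W ∧
      {g : G | CF (Finsupp.single g 1) ≠ Finsupp.single g 1} =
        {g : G | ∀ T ∈ F, T (Finsupp.single g 1) = Finsupp.single g 1} \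
          {g : G | W (Finsupp.single g 1) = Finsupp.single g 1} := by
  refine ⟨sup_eq_left.mpr (hkerCF ▸ inf_le_left), ?_⟩
  have hRedF_compl : {g : G | ∀ T ∈ F, T (single g 1) = single g 1}ᶜ ⊆
      leadingMonomials (LinearMap.ker W) := by
    intro g hg
    obtain ⟨T, hTF, hTg⟩ : ∃ T ∈ F, T (single g 1) ≠ single g 1 := by simpa using hg
    have hTW : LinearMap.ker T ≤ LinearMap.ker W := hkerW ▸ le_biSup (LinearMap.ker ·) hTF
    exact leadingMonomials_mono hTW ((hF T hTF).nonReduced_eq_leadingMonomials ▸ hTg)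
  rw [hCF.nonReduced_eq_leadingMonomials, hkerCF, hkerVbar, ← supported_eq_span_single,
    leadingMonomials_inf_supported hRedF_compl, ← hW.nonReduced_eq_leadingMonomials]
  exact Set.inter_comm _ _

/-- The `F`-complement `C^F = (∧F) ∨ (∨F̄)` is a minimal complement of `F`:
it is greater or equal to `∧F` (i.e. `(∧F) ∧ C^F = ∧F`, which via the kernel
bijection means `ker W ⊔ ker C^F = ker W`) and its set of non-reduced
generators is exactly `Obs(F) = Red(F) \ Red(∧F)`.  Here `W = ∧F`, `Vbar = ∨F̄`
is the reduction operator with kernel `K⟨Red(F)⟩`, and `CF` is the reduction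
operator with kernel `ker W ⊓ ker Vbar`. -/
theorem F_complement_minimal {K G : Type*} [Field K] [LinearOrder G]
    [WellFoundedLT G] (F : Set (Module.End K (G →₀ K)))
    (hF : ∀ T ∈ F, IsRedOp T) (W Vbar CF : Module.End K (G →₀ K))
    (hW : IsRedOp W) (hVbar : IsRedOp Vbar) (hCF : IsRedOp CF)
    (hkerW : LinearMap.ker W = ⨆ T ∈ F, LinearMap.ker T)
    (hkerVbar : LinearMap.ker Vbar = Submodule.span K
      ((fun g => Finsupp.single g (1 : K)) ''
        {g : G | ∀ T ∈ F, T (Finsupp.single g 1) = Finsupp.single g 1}))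
    (hkerCF : LinearMap.ker CF = LinearMap.ker W ⊓ LinearMap.ker Vbar) :
    LinearMap.ker W ⊔ LinearMap.ker CF = LinearMap.ker W ∧
      {g : G | CF (Finsupp.single g 1) ≠ Finsupp.single g 1} =
        {g : G | ∀ T ∈ F, T (Finsupp.single g 1) = Finsupp.single g 1} \
          {g : G | W (Finsupp.single g 1) = Finsupp.single g 1} :=
  F_complement_minimal_general F hF W Vbar CF hW hCF hkerW hkerVbar hkerCF
end
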